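/- arXiv:2110.15421 — 6 statements merged into one kernel-verified Lean document; each statement's English description precedes it below -/
import Mathlib

section
/- Every k-leaf power is a chordal graph. -/
/-- A finite rooted tree on vertex type `α`, encoded by a parent function.
The root is its own parent, and every vertex reaches the root by iterating `parent`. -/
structure RTree (α : Type) where
  root : α
  parent : α → α
  parent_root : parent root = root
  reaches : ∀ v : α, ∃ n : ℕ, parent^[n] v = root

namespace RTree

variable {α : Type}

/-- The underlying undirected graph of a rooted tree. -/
def graph (T : RTree α) : SimpleGraph α :=
  SimpleGraph.fromRel (fun a b => T.parent a = b)

/-- Distance between two nodes of the tree. -/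
noncomputable def dist (T : RTree α) (u v : α) : ℕ := T.graph.dist u v

/-- The set of children of a node. -/
def children (T : RTree α) (v : α) : Set α := {u | u ≠ T.root ∧ T.parent u = v}

/-- A leaf is a node with no children. -/
def IsLeaf (T : RTree α) (v : α) : Prop := T.children v = ∅

/-- The set of leaves of the tree. -/
def leaves (T : RTree α) : Set α := {v | T.IsLeaf v}

/-- `u` is a descendant of `v` (possibly `u = v`). -/
def Descends (T : RTree α) (u v : α) : Prop := ∃ n : ℕ, T.parent^[n] u = v

end RTree

/-- `T` together with the identification `f` of vertices of `G` with the leaves of `T`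
is a `k`-leaf root of `G`: the leaves of `T` are exactly (the image of) `V(G)`, and
distinct vertices are adjacent in `G` iff their distance in `T` is at most `k`. -/
def IsLeafRoot {V W : Type} (k : ℕ) (G : SimpleGraph V) (T : RTree W) (f : V → W) : Prop :=
  Function.Injective f ∧ Set.range f = T.leaves ∧
    ∀ u v : V, u ≠ v → (G.Adj u v ↔ T.dist (f u) (f v) ≤ k)

/-- `G` is a `k`-leaf power if it admits a (finite) `k`-leaf root.
(The empty graph is a `k`-leaf power via the empty tree, which our encoding of
rooted trees cannot represent, whence the first disjunct.) -/
def IsKLeafPower {V : Type} (k : ℕ) (G : SimpleGraph V) : Prop :=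
  IsEmpty V ∨ ∃ W : Type, Finite W ∧ ∃ (T : RTree W) (f : V → W), IsLeafRoot k G T f

/-- The vertex set of the restriction `T|X`: all vertices lying on a shortest path
between two elements of `X`. -/
def restrictSet {α : Type} (T : RTree α) (X : Set α) : Set α :=
  {w | ∃ u ∈ X, ∃ v ∈ X, T.dist u w + T.dist w v = T.dist u v}

/-- A graph is chordal if every cycle of length at least 4 has a chord. -/
def IsChordal {V : Type} (G : SimpleGraph V) : Prop :=
  ∀ (v : V) (c : G.Walk v v), c.IsCycle → 4 ≤ c.length →
    ∃ u w : V, u ∈ c.support ∧ w ∈ c.support ∧ G.Adj u w ∧ s(u, w) ∉ c.edges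



namespace LeafPowerAux
set_option linter.unusedSectionVars false

variable {W : Type} [DecidableEq W]

/-- Depth of a vertex: number of parent steps to reach the root. -/
noncomputable def dep (T : RTree W) (v : W) : ℕ := Nat.find (T.reaches v)

lemma iterate_root (T : RTree W) (n : ℕ) : T.parent^[n] T.root = T.root :=
  Function.iterate_fixed T.parent_root n

lemma dep_spec (T : RTree W) (v : W) : T.parent^[dep T v] v = T.root :=
  Nat.find_spec (T.reaches v)

lemma dep_min (T : RTree W) {v : W} {n : ℕ} (h : T.parent^[n] v = T.root) :
    dep T v ≤ n := Nat.find_min' _ h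

lemma dep_iterate (T : RTree W) {v : W} {i : ℕ} (hi : i ≤ dep T v) :
    dep T (T.parent^[i] v) = dep T v - i := by
  apply le_antisymm
  · apply dep_min
    rw [← Function.iterate_add_apply]
    rw [Nat.sub_add_cancel hi]
    exact dep_spec T v
  · have h := dep_spec T (T.parent^[i] v)
    rw [← Function.iterate_add_apply] at h
    have := dep_min T h
    omega

lemma dep_eq_zero_iff (T : RTree W) {v : W} : dep T v = 0 ↔ v = T.root := by
  constructor
  · intro h
    have := dep_spec T v
    rwa [h] at this
  · rintro rfl
    exact Nat.le_zero.mp (dep_min T (by simp))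

/-- The ancestor set of a vertex. -/
noncomputable def anc (T : RTree W) (v : W) : Finset W :=
  (Finset.range (dep T v + 1)).image (fun i => T.parent^[i] v)

lemma mem_anc_iff (T : RTree W) {v w : W} :
    w ∈ anc T v ↔ ∃ i ≤ dep T v, T.parent^[i] v = w := by
  simp [anc, Nat.lt_succ_iff]

lemma mem_anc_iterate (T : RTree W) (v : W) (n : ℕ) : T.parent^[n] v ∈ anc T v := by
  rcases le_or_gt n (dep T v) with h | h
  · exact (mem_anc_iff T).mpr ⟨n, h, rfl⟩
  · have : T.parent^[n] v = T.root := by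
      have : T.parent^[(n - dep T v) + dep T v] v = T.root := by
        rw [Function.iterate_add_apply, dep_spec, iterate_root]
      rwa [Nat.sub_add_cancel h.le] at this
    rw [this]
    exact (mem_anc_iff T).mpr ⟨dep T v, le_rfl, dep_spec T v⟩

lemma self_mem_anc (T : RTree W) (v : W) : v ∈ anc T v := mem_anc_iterate T v 0

lemma root_mem_anc (T : RTree W) (v : W) : T.root ∈ anc T v := by
  have := mem_anc_iterate T v (dep T v)
  rwa [dep_spec] at this

lemma dep_le_of_mem_anc (T : RTree W) {v w : W} (h : w ∈ anc T v) :
    dep T w ≤ dep T v ∧ T.parent^[dep T v - dep T w] v = w := by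
  obtain ⟨i, hi, rfl⟩ := (mem_anc_iff T).mp h
  have := dep_iterate T hi
  constructor
  · omega
  · have : dep T v - dep T (T.parent^[i] v) = i := by omega
    rw [this]

lemma anc_subset_of_mem (T : RTree W) {v w : W} (h : w ∈ anc T v) :
    anc T w ⊆ anc T v := by
  intro z hz
  obtain ⟨i, _, rfl⟩ := (mem_anc_iff T).mp hz
  obtain ⟨j, _, rfl⟩ := (mem_anc_iff T).mp h
  rw [← Function.iterate_add_apply]
  exact mem_anc_iterate T v _

lemma anc_comparable (T : RTree W) {v z m : W} (hz : z ∈ anc T v) (hm : m ∈ anc T v)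
    (h : dep T z ≤ dep T m) : z ∈ anc T m := by
  obtain ⟨i, hi, rfl⟩ := (mem_anc_iff T).mp hz
  obtain ⟨j, hj, rfl⟩ := (mem_anc_iff T).mp hm
  have hdi := dep_iterate T hi
  have hdj := dep_iterate T hj
  have hji : j ≤ i := by omega
  have : T.parent^[i] v = T.parent^[i - j] (T.parent^[j] v) := by
    rw [← Function.iterate_add_apply]
    congr 1
    omega
  rw [this]
  exact mem_anc_iterate T _ _

lemma card_anc (T : RTree W) (v : W) : (anc T v).card = dep T v + 1 := by
  rw [anc, Finset.card_image_of_injOn, Finset.card_range]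
  intro i hi j hj hij
  simp only [Finset.mem_coe, Finset.mem_range, Nat.lt_succ_iff] at hi hj
  have h1 := dep_iterate T hi
  have h2 := dep_iterate T hj
  have hij' : T.parent^[i] v = T.parent^[j] v := hij
  rw [hij'] at h1
  omega

end LeafPowerAux
namespace LeafPowerAux

variable {W : Type} [DecidableEq W]

/-- Gromov product: depth of the deepest common ancestor. -/
noncomputable def gp (T : RTree W) (u v : W) : ℕ :=
  ((anc T u ∩ anc T v).image (dep T)).max'
    ⟨dep T T.root, Finset.mem_image_of_mem _ (Finset.mem_inter.mpr ⟨root_mem_anc T u, root_mem_anc T v⟩)⟩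

lemma le_gp (T : RTree W) {u v z : W} (h : z ∈ anc T u ∩ anc T v) :
    dep T z ≤ gp T u v :=
  Finset.le_max' _ _ (Finset.mem_image_of_mem _ h)

lemma gp_exists (T : RTree W) (u v : W) :
    ∃ m, m ∈ anc T u ∩ anc T v ∧ dep T m = gp T u v := by
  have := Finset.max'_mem ((anc T u ∩ anc T v).image (dep T))
    ⟨dep T T.root, Finset.mem_image_of_mem _ (Finset.mem_inter.mpr ⟨root_mem_anc T u, root_mem_anc T v⟩)⟩
  obtain ⟨m, hm, hdm⟩ := Finset.mem_image.mp this
  exact ⟨m, hm, hdm⟩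

lemma gp_comm (T : RTree W) (u v : W) : gp T u v = gp T v u := by
  unfold gp
  congr 1
  rw [Finset.inter_comm]

lemma anc_inter_eq (T : RTree W) {u v m : W} (hm : m ∈ anc T u ∩ anc T v)
    (hd : dep T m = gp T u v) : anc T u ∩ anc T v = anc T m := by
  rw [Finset.mem_inter] at hm
  apply Finset.Subset.antisymm
  · intro z hz
    have hle : dep T z ≤ dep T m := hd ▸ le_gp T hz
    rw [Finset.mem_inter] at hz
    exact anc_comparable T hz.1 hm.1 hle
  · intro z hz
    exact Finset.mem_inter.mpr
      ⟨anc_subset_of_mem T hm.1 hz, anc_subset_of_mem T hm.2 hz⟩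

lemma gp_le_dep (T : RTree W) (u v : W) : gp T u v ≤ dep T u := by
  obtain ⟨m, hm, hd⟩ := gp_exists T u v
  rw [← hd]
  exact (dep_le_of_mem_anc T (Finset.mem_inter.mp hm).1).1

lemma gp_hyp (T : RTree W) (u v w : W) : min (gp T u v) (gp T v w) ≤ gp T u w := by
  obtain ⟨m1, hm1, hd1⟩ := gp_exists T u v
  obtain ⟨m2, hm2, hd2⟩ := gp_exists T v w
  rw [Finset.mem_inter] at hm1 hm2
  rcases le_total (dep T m1) (dep T m2) with h | h
  · have : m1 ∈ anc T m2 := anc_comparable T hm1.2 hm2.1 h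
    have hw : m1 ∈ anc T w := anc_subset_of_mem T hm2.2 this
    have := le_gp T (Finset.mem_inter.mpr ⟨hm1.1, hw⟩)
    omega
  · have : m2 ∈ anc T m1 := anc_comparable T hm2.1 hm1.2 h
    have hu : m2 ∈ anc T u := anc_subset_of_mem T hm1.1 this
    have := le_gp T (Finset.mem_inter.mpr ⟨hu, hm2.2⟩)
    omega

lemma parent_eq_self_iff (T : RTree W) {v : W} : T.parent v = v ↔ v = T.root := by
  constructor
  · intro h
    obtain ⟨n, hn⟩ := T.reaches v
    rwa [Function.iterate_fixed h n] at hn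
  · rintro rfl; exact T.parent_root

lemma adj_parent (T : RTree W) {v : W} (h : v ≠ T.root) :
    T.graph.Adj v (T.parent v) := by
  rw [RTree.graph, SimpleGraph.fromRel_adj]
  refine ⟨fun hv => h ?_, Or.inl rfl⟩
  exact (parent_eq_self_iff T).mp hv.symm

lemma exists_walk_up (T : RTree W) :
    ∀ (i : ℕ) (v : W), i ≤ dep T v →
      ∃ w : T.graph.Walk v (T.parent^[i] v), w.length = i := by
  intro i
  induction i with
  | zero => intro v _; exact ⟨SimpleGraph.Walk.nil.copy rfl (by simp), by simp⟩
  | succ i ih =>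
    intro v hv
    have hroot : v ≠ T.root := by
      intro h
      rw [← dep_eq_zero_iff T] at h
      omega
    have hdp : dep T (T.parent v) = dep T v - 1 := by
      have := dep_iterate T (v := v) (i := 1) (by omega)
      simpa using this
    obtain ⟨w, hw⟩ := ih (T.parent v) (by omega)
    refine ⟨(SimpleGraph.Walk.cons (adj_parent T hroot) w).copy rfl ?_, by simp [hw]⟩
    rw [← Function.iterate_succ_apply]

lemma tree_reachable (T : RTree W) (u v : W) : T.graph.Reachable u v := by
  obtain ⟨w1, _⟩ := exists_walk_up T (dep T u) u le_rfl
  obtain ⟨w2, _⟩ := exists_walk_up T (dep T v) v le_rfl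
  rw [dep_spec] at w1 w2
  exact ⟨w1.append w2.reverse⟩

lemma anc_insert_of_parent (T : RTree W) {a : W} (h : a ≠ T.root) :
    anc T a = insert a (anc T (T.parent a)) ∧ a ∉ anc T (T.parent a) := by
  have hdp : dep T (T.parent a) = dep T a - 1 := by
    have := dep_iterate T (v := a) (i := 1)
      (by rw [Nat.one_le_iff_ne_zero, Ne, dep_eq_zero_iff]; exact h)
    simpa using this
  have hda : 1 ≤ dep T a := by
    rw [Nat.one_le_iff_ne_zero, Ne, dep_eq_zero_iff]; exact h
  constructor
  · ext z
    simp only [Finset.mem_insert, mem_anc_iff]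
    constructor
    · rintro ⟨i, hi, rfl⟩
      cases i with
      | zero => left; rfl
      | succ j =>
        right
        exact ⟨j, by omega, by rw [← Function.iterate_succ_apply]⟩
    · rintro (rfl | ⟨j, hj, rfl⟩)
      · exact ⟨0, by omega, rfl⟩
      · exact ⟨j + 1, by omega, by rw [Function.iterate_succ_apply]⟩
  · intro hmem
    have := (dep_le_of_mem_anc T hmem).1
    omega

lemma card_symmDiff_adj (T : RTree W) {a b : W} (h : T.graph.Adj a b) :
    (symmDiff (anc T a) (anc T b)).card ≤ 1 := by
  rw [RTree.graph, SimpleGraph.fromRel_adj] at h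
  obtain ⟨hne, hpar | hpar⟩ := h
  · have ha : a ≠ T.root := by
      intro h; apply hne; rw [← hpar, h, T.parent_root]
    obtain ⟨heq, hnm⟩ := anc_insert_of_parent T ha
    rw [hpar] at heq hnm
    rw [heq]
    have : symmDiff (insert a (anc T b)) (anc T b) = {a} := by
      ext z
      simp only [Finset.mem_symmDiff, Finset.mem_insert, Finset.mem_singleton]
      constructor
      · rintro (⟨rfl | hz, hz2⟩ | ⟨hz, hz2⟩)
        · rfl
        · exact absurd hz hz2
        · exact absurd (Or.inr hz) hz2
      · rintro rfl
        exact Or.inl ⟨Or.inl rfl, hnm⟩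
    rw [this, Finset.card_singleton]
  · have hb : b ≠ T.root := by
      intro h; apply hne; rw [← hpar, h, T.parent_root]
    obtain ⟨heq, hnm⟩ := anc_insert_of_parent T hb
    rw [hpar] at heq hnm
    rw [symmDiff_comm, heq]
    have : symmDiff (insert b (anc T a)) (anc T a) = {b} := by
      ext z
      simp only [Finset.mem_symmDiff, Finset.mem_insert, Finset.mem_singleton]
      constructor
      · rintro (⟨rfl | hz, hz2⟩ | ⟨hz, hz2⟩)
        · rfl
        · exact absurd hz hz2
        · exact absurd (Or.inr hz) hz2
      · rintro rfl
        exact Or.inl ⟨Or.inl rfl, hnm⟩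
    rw [this, Finset.card_singleton]

lemma card_symmDiff_le_length (T : RTree W) {u v : W} (w : T.graph.Walk u v) :
    (symmDiff (anc T u) (anc T v)).card ≤ w.length := by
  induction w with
  | nil => simp
  | @cons a b c h p ih =>
    have htri : symmDiff (anc T a) (anc T c) ⊆ (symmDiff (anc T a) (anc T b)) ∪ (symmDiff (anc T b) (anc T c)) :=
      symmDiff_triangle _ _ _
    calc (symmDiff (anc T a) (anc T c)).card
        ≤ ((symmDiff (anc T a) (anc T b)) ∪ (symmDiff (anc T b) (anc T c))).card := Finset.card_le_card htri
      _ ≤ (symmDiff (anc T a) (anc T b)).card + (symmDiff (anc T b) (anc T c)).card := Finset.card_union_le _ _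
      _ ≤ 1 + p.length := Nat.add_le_add (card_symmDiff_adj T h) ih
      _ = (SimpleGraph.Walk.cons h p).length := by simp [Nat.add_comm]

lemma dist_gp (T : RTree W) (u v : W) :
    T.graph.dist u v + 2 * gp T u v = dep T u + dep T v := by
  obtain ⟨m, hm, hd⟩ := gp_exists T u v
  have hinter := anc_inter_eq T hm hd
  rw [Finset.mem_inter] at hm
  obtain ⟨hmu, hiu⟩ := dep_le_of_mem_anc T hm.1
  obtain ⟨hmv, hiv⟩ := dep_le_of_mem_anc T hm.2
  -- upper bound
  obtain ⟨w1, hw1⟩ := exists_walk_up T (dep T u - dep T m) u (by omega)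
  obtain ⟨w2, hw2⟩ := exists_walk_up T (dep T v - dep T m) v (by omega)
  have hupper : T.graph.dist u v ≤ (dep T u - dep T m) + (dep T v - dep T m) := by
    have := SimpleGraph.dist_le ((w1.copy rfl hiu).append (w2.copy rfl hiv).reverse)
    simpa [hw1, hw2] using this
  -- lower bound
  obtain ⟨p, hp⟩ := (tree_reachable T u v).exists_walk_length_eq_dist
  have hlow := card_symmDiff_le_length T p
  rw [hp] at hlow
  have hsub : anc T u ∩ anc T v ⊆ anc T u ∪ anc T v :=
    le_trans Finset.inter_subset_left Finset.subset_union_left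
  have hss : symmDiff (anc T u) (anc T v) = (anc T u ∪ anc T v) \ (anc T u ∩ anc T v) := by
    ext z
    simp only [Finset.mem_symmDiff, Finset.mem_sdiff, Finset.mem_union, Finset.mem_inter]
    tauto
  have hcardle := Finset.card_le_card hsub
  have hcard : (symmDiff (anc T u) (anc T v)).card + (anc T u ∩ anc T v).card
      = (anc T u ∪ anc T v).card := by
    rw [hss, Finset.card_sdiff_of_subset hsub]
    omega
  have huv : (anc T u ∪ anc T v).card + (anc T u ∩ anc T v).card
      = (anc T u).card + (anc T v).card := Finset.card_union_add_card_inter _ _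
  rw [hinter] at hcard huv
  rw [card_anc, card_anc, card_anc, hd] at *
  omega

/-- Four-point condition for the tree metric. -/
lemma fpc (T : RTree W) (a b c d : W) :
    T.graph.dist a c + T.graph.dist b d ≤
      max (T.graph.dist a b + T.graph.dist c d) (T.graph.dist a d + T.graph.dist b c) := by
  have h1 := gp_hyp T a b c
  have h2 := gp_hyp T a d c
  have h3 := gp_hyp T b a d
  have h4 := gp_hyp T b c d
  have e1 := dist_gp T a c
  have e2 := dist_gp T b d
  have e3 := dist_gp T a b
  have e4 := dist_gp T c d
  have e5 := dist_gp T a d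
  have e6 := dist_gp T b c
  have c1 := gp_comm T a b
  have c2 := gp_comm T a d
  have c3 := gp_comm T c d
  have c4 := gp_comm T b c
  omega

end LeafPowerAux
namespace LeafPowerAux
set_option linter.unusedSectionVars false

open SimpleGraph Walk

variable {V : Type} {G : SimpleGraph V}

lemma support_getElem? {u v : V} (w : G.Walk u v) :
    ∀ i, i ≤ w.length → w.support[i]? = some (w.getVert i) := by
  induction w with
  | nil =>
    intro i hi
    have : i = 0 := Nat.le_zero.mp hi
    subst this
    rfl
  | @cons a b c h p ih =>
    intro i hi
    cases i with
    | zero => rw [Walk.support_cons, List.getElem?_cons_zero, Walk.getVert_zero]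
    | succ j =>
      rw [Walk.support_cons, List.getElem?_cons_succ, Walk.getVert_cons_succ]
      exact ih j (by simpa using hi)

lemma cycle_getVert_inj {v : V} {c : G.Walk v v} (hc : c.IsCycle)
    {i j : ℕ} (hi1 : 1 ≤ i) (hi2 : i ≤ c.length) (hj1 : 1 ≤ j) (hj2 : j ≤ c.length)
    (h : c.getVert i = c.getVert j) : i = j := by
  have hnd := hc.support_nodup
  have hsi := support_getElem? c i hi2
  have hsj := support_getElem? c j hj2
  rw [Walk.support_eq_cons] at hsi hsj
  obtain ⟨i', rfl⟩ : ∃ i', i = i' + 1 := ⟨i - 1, by omega⟩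
  obtain ⟨j', rfl⟩ : ∃ j', j = j' + 1 := ⟨j - 1, by omega⟩
  rw [List.getElem?_cons_succ] at hsi hsj
  rw [List.getElem?_eq_some_iff] at hsi hsj
  obtain ⟨hli, hgi⟩ := hsi
  obtain ⟨hlj, hgj⟩ := hsj
  have heq : c.support.tail[i'] = c.support.tail[j'] := by rw [hgi, hgj]; exact h
  have : i' = j' := hnd.getElem_inj_iff.mp heq
  omega

lemma cycle_getVert_inj' {v : V} {c : G.Walk v v} (hc : c.IsCycle)
    {i j : ℕ} (hi : i < c.length) (hj : j < c.length)
    (h : c.getVert i = c.getVert j) : i = j := by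
  have h3 := hc.three_le_length
  rcases Nat.eq_zero_or_pos i with rfl | hi1
  · rcases Nat.eq_zero_or_pos j with rfl | hj1
    · rfl
    · have h0 : c.getVert c.length = c.getVert j := by
        rw [Walk.getVert_length]
        rw [Walk.getVert_zero] at h
        exact h
      have := cycle_getVert_inj hc (by omega) le_rfl hj1 hj.le h0
      omega
  · rcases Nat.eq_zero_or_pos j with rfl | hj1
    · have h0 : c.getVert i = c.getVert c.length := by
        rw [Walk.getVert_length]
        rw [Walk.getVert_zero] at h
        exact h
      have := cycle_getVert_inj hc hi1 hi.le (by omega) le_rfl h0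
      omega
    · exact cycle_getVert_inj hc hi1 hi.le hj1 hj.le h

lemma edges_exists_getVert {u v : V} (w : G.Walk u v) {e : Sym2 V} (he : e ∈ w.edges) :
    ∃ m, m < w.length ∧ e = s(w.getVert m, w.getVert (m + 1)) := by
  induction w with
  | nil => simp at he
  | @cons a b c h p ih =>
    rw [Walk.edges_cons, List.mem_cons] at he
    rcases he with rfl | he
    · exact ⟨0, by simp, by rw [Walk.getVert_zero, Walk.getVert_cons_succ, Walk.getVert_zero]⟩
    · obtain ⟨m, hm, hme⟩ := ih he
      exact ⟨m + 1, by simpa using hm,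
        by rw [Walk.getVert_cons_succ, Walk.getVert_cons_succ]; exact hme⟩

end LeafPowerAux
namespace LeafPowerAux

lemma getVert_mem_support' {V : Type} {G : SimpleGraph V} {u v : V}
    (w : G.Walk u v) (i : ℕ) : w.getVert i ∈ w.support := by
  rcases le_or_gt i w.length with hle | hlt
  · obtain ⟨hlt', heq⟩ := List.getElem?_eq_some_iff.mp (support_getElem? w i hle)
    rw [← heq]
    exact List.getElem_mem hlt'
  · rw [SimpleGraph.Walk.getVert_of_length_le w hlt.le]
    exact SimpleGraph.Walk.end_mem_support w

end LeafPowerAux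

/-- Every `k`-leaf power is chordal. -/
theorem stmt3 {V : Type} (k : ℕ) (G : SimpleGraph V)
    (h : IsKLeafPower k G) : IsChordal G := by
  classical
  rcases h with hV | ⟨W, hWfin, T, f, _, _, hiff⟩
  · intro v c hc hlen
    exact (hV.false v).elim
  intro v c hc hlen
  by_contra hchord
  push_neg at hchord
  -- notation
  let D : ℕ → ℕ → ℕ := fun i j => T.graph.dist (f (c.getVert i)) (f (c.getVert j))
  have hg0 : c.getVert c.length = c.getVert 0 := by
    rw [SimpleGraph.Walk.getVert_length, SimpleGraph.Walk.getVert_zero]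
  have hne : ∀ i j, i < c.length → j < c.length → i ≠ j →
      c.getVert i ≠ c.getVert j := by
    intro i j hi hj hij hgij
    exact hij (LeafPowerAux.cycle_getVert_inj' hc hi hj hgij)
  have hadjle : ∀ i j, G.Adj (c.getVert i) (c.getVert j) → D i j ≤ k := by
    intro i j hadj
    exact (hiff (c.getVert i) (c.getVert j) (G.ne_of_adj hadj)).mp hadj
  have hnadj : ∀ i j, i < j → j < c.length → 2 ≤ j - i →
      ¬(i = 0 ∧ j = c.length - 1) → k + 1 ≤ D i j := by
    intro i j hij hj hgap hnw
    have hgne : c.getVert i ≠ c.getVert j := hne i j (by omega) hj (by omega)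
    have hna : ¬ G.Adj (c.getVert i) (c.getVert j) := by
      intro hadj
      have hedge := hchord (c.getVert i) (c.getVert j)
        (LeafPowerAux.getVert_mem_support' c i)
        (LeafPowerAux.getVert_mem_support' c j) hadj
      obtain ⟨m, hm, hme⟩ := LeafPowerAux.edges_exists_getVert c hedge
      rw [Sym2.eq_iff] at hme
      rcases hme with ⟨h1, h2⟩ | ⟨h1, h2⟩
      · have him : i = m := LeafPowerAux.cycle_getVert_inj' hc (by omega) hm h1
        rcases Nat.lt_or_ge (m + 1) c.length with hm1 | hm1
        · have : j = m + 1 := LeafPowerAux.cycle_getVert_inj' hc hj hm1 h2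
          omega
        · have hmn : m + 1 = c.length := by omega
          rw [hmn, hg0] at h2
          have : j = 0 := LeafPowerAux.cycle_getVert_inj' hc hj (by omega) h2
          omega
      · have hjm : j = m := LeafPowerAux.cycle_getVert_inj' hc hj hm h2
        rcases Nat.lt_or_ge (m + 1) c.length with hm1 | hm1
        · have : i = m + 1 := LeafPowerAux.cycle_getVert_inj' hc (by omega) hm1 h1
          omega
        · have hmn : m + 1 = c.length := by omega
          rw [hmn, hg0] at h1
          have : i = 0 := LeafPowerAux.cycle_getVert_inj' hc (by omega) (by omega) h1
          exact hnw ⟨this, by omega⟩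
    have hnd : ¬ (D i j ≤ k) := fun hd => hna ((hiff _ _ hgne).mpr hd)
    omega
  have hadjD : ∀ i, i < c.length → D i (i + 1) ≤ k := by
    intro i hi
    exact hadjle i (i + 1) (c.adj_getVert_succ hi)
  -- key induction
  have key : ∀ j, 2 ≤ j → j ≤ c.length - 1 → D 1 j + 1 ≤ D 0 j := by
    intro j hj2
    induction j, hj2 using Nat.le_induction with
    | base =>
      intro hj
      have h02 : k + 1 ≤ D 0 2 := hnadj 0 2 (by omega) (by omega) (by omega) (by omega)
      have h12 : D 1 2 ≤ k := hadjD 1 (by omega)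
      omega
    | succ j hj ih =>
      intro hj1
      have hIH := ih (by omega)
      have hS1a : D 0 1 ≤ k := hadjD 0 (by omega)
      have hS1b : D j (j + 1) ≤ k := hadjD j (by omega)
      have hS2a : k + 1 ≤ D 0 j := hnadj 0 j (by omega) (by omega) (by omega) (by omega)
      have hS2b : k + 1 ≤ D 1 (j + 1) :=
        hnadj 1 (j + 1) (by omega) (by omega) (by omega) (by omega)
      have hf1 : D 0 j + D 1 (j + 1) ≤ max (D 0 1 + D j (j + 1)) (D 0 (j + 1) + D 1 j) :=
        LeafPowerAux.fpc T _ _ _ _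
      have hf2 : D 0 (j + 1) + D 1 j ≤ max (D 0 1 + D (j + 1) j) (D 0 j + D 1 (j + 1)) :=
        LeafPowerAux.fpc T _ _ _ _
      have hcomm : D (j + 1) j = D j (j + 1) := SimpleGraph.dist_comm
      omega
  have hfinal := key (c.length - 1) (by omega) (by omega)
  have hlast : D 0 (c.length - 1) ≤ k := by
    have hadj := c.adj_getVert_succ (i := c.length - 1) (by omega)
    rw [show c.length - 1 + 1 = c.length by omega, hg0] at hadj
    have := hadjle 0 (c.length - 1) hadj.symm
    exact this
  have h1n : k + 1 ≤ D 1 (c.length - 1) :=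
    hnadj 1 (c.length - 1) (by omega) (by omega) (by omega) (by omega)
  omega
end

section
/- Let G be a connected k-leaf power with k-leaf root T, let C ⊆ V(G) be a clique of G, and let X ⊆ V(G) with C ⊆ X ⊆ C ∪ N_G(C). Then the tree T|C has height at most k, every leaf of X \ C is at distance at most 2k from the root of T|C in T, and hence the restriction T|X has height at most 3k. -/
/-!
Distances in a rooted tree are governed by lowest common ancestors:
`dist u v + 2 * depth (lca u v) = depth u + depth v`, and the vertex of `T|S` closest to the root
is the lowest common ancestor `z` of `S`. For any `a ∈ S`, either `z = a` or `z = lca a b` for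
some other `b ∈ S`; then `z` lies on the path from `a` to the leaf `b ≠ z`, so
`dist z a < dist a b`. For `S = f(C)` the vertices `a, b` are adjacent, giving `dist rC (f a) < k`.
For `S = f(X)` either `rX = rC`, or `rX = lca (f c) (f x)` with `f x` outside the subtree of `rC`;
then `x` has a neighbour `u ∈ C`, the lowest common ancestor does not change when `f c` is
replaced by `f u`, and `dist rX rC ≤ dist rX (f u) < dist (f u) (f x) ≤ k`. The triangle
inequality through `rC` gives the bounds `2k` and `3k`.
-/

namespace RTree

variable {α : Type} (T : RTree α)

open Classical in
noncomputable def depth (v : α) : ℕ := Nat.find (T.reaches v)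

section Depth

variable {T}

lemma iterate_parent_depth (v : α) : T.parent^[T.depth v] v = T.root := by
  classical exact Nat.find_spec (T.reaches v)

lemma depth_le_of_iterate_eq_root {v : α} {n : ℕ} (h : T.parent^[n] v = T.root) :
    T.depth v ≤ n := by
  classical exact Nat.find_min' (T.reaches v) h

lemma iterate_parent_root (n : ℕ) : T.parent^[n] T.root = T.root :=
  Function.iterate_fixed T.parent_root n

lemma iterate_parent_eq_root {v : α} {n : ℕ} (h : T.depth v ≤ n) :
    T.parent^[n] v = T.root := by
  rw [← Nat.sub_add_cancel h, Function.iterate_add_apply, iterate_parent_depth,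
    iterate_parent_root]

@[simp]
lemma depth_root : T.depth T.root = 0 :=
  Nat.le_zero.mp (depth_le_of_iterate_eq_root (n := 0) rfl)

lemma depth_eq_zero {v : α} : T.depth v = 0 ↔ v = T.root := by
  refine ⟨fun h => ?_, fun h => h ▸ depth_root⟩
  simpa [h] using iterate_parent_depth (T := T) v

lemma depth_parent {v : α} (hv : v ≠ T.root) : T.depth (T.parent v) + 1 = T.depth v := by
  have hpos : T.depth v ≠ 0 := mt depth_eq_zero.mp hv
  have hle : T.depth v ≤ T.depth (T.parent v) + 1 := depth_le_of_iterate_eq_root <| by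
    rw [Function.iterate_succ_apply, iterate_parent_depth]
  have hge : T.depth (T.parent v) ≤ T.depth v - 1 := depth_le_of_iterate_eq_root <| by
    rw [← Function.iterate_succ_apply, Nat.succ_eq_add_one, Nat.sub_add_cancel (by omega),
      iterate_parent_depth]
  omega

lemma depth_iterate_parent_add {v : α} {n : ℕ} (hn : n ≤ T.depth v) :
    T.depth (T.parent^[n] v) + n = T.depth v := by
  induction n with
  | zero => rfl
  | succ n ih =>
    have hne : T.parent^[n] v ≠ T.root := fun h => by
      have := ih (by omega)
      rw [h, depth_root] at this
      omega
    rw [Function.iterate_succ_apply', ← ih (by omega), ← depth_parent hne]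
    omega

end Depth

section Descends

variable {T}

lemma Descends.refl (v : α) : T.Descends v v := ⟨0, rfl⟩

lemma Descends.trans {u v w : α} (h₁ : T.Descends u v) (h₂ : T.Descends v w) :
    T.Descends u w := by
  obtain ⟨m, rfl⟩ := h₁
  obtain ⟨n, rfl⟩ := h₂
  exact ⟨n + m, Function.iterate_add_apply _ _ _ _⟩

lemma descends_parent (v : α) : T.Descends v (T.parent v) := ⟨1, rfl⟩

lemma descends_root (v : α) : T.Descends v T.root := ⟨_, iterate_parent_depth v⟩

lemma Descends.iterate_parent_depth_sub {u v : α} (h : T.Descends u v) :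
    T.depth v ≤ T.depth u ∧ T.parent^[T.depth u - T.depth v] u = v := by
  obtain ⟨n, rfl⟩ := h
  by_cases hn : n ≤ T.depth u
  · have := depth_iterate_parent_add hn
    exact ⟨by omega, by rw [show T.depth u - T.depth (T.parent^[n] u) = n by omega]⟩
  · rw [iterate_parent_eq_root (by omega : T.depth u ≤ n), depth_root, Nat.sub_zero]
    exact ⟨Nat.zero_le _, iterate_parent_depth u⟩

lemma Descends.parent_of_ne {u v : α} (h : T.Descends u v) (hne : u ≠ v) :
    T.Descends (T.parent u) v := by
  obtain ⟨n, rfl⟩ := h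
  obtain ⟨n, rfl⟩ := Nat.exists_eq_succ_of_ne_zero (n := n) fun h0 => hne (by simp [h0])
  exact ⟨n, (Function.iterate_succ_apply _ _ _).symm⟩

lemma Descends.depth_le {u v : α} (h : T.Descends u v) : T.depth v ≤ T.depth u :=
  h.iterate_parent_depth_sub.1

lemma Descends.eq_of_depth_le {u v : α} (h : T.Descends u v) (hle : T.depth u ≤ T.depth v) :
    u = v := by
  simpa [Nat.sub_eq_zero_of_le hle] using h.iterate_parent_depth_sub.2

lemma Descends.depth_lt {u v : α} (h : T.Descends u v) (hne : u ≠ v) : T.depth v < T.depth u :=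
  lt_of_le_of_ne h.depth_le fun heq => hne (h.eq_of_depth_le heq.ge)

lemma Descends.antisymm {u v : α} (h₁ : T.Descends u v) (h₂ : T.Descends v u) : u = v :=
  h₁.eq_of_depth_le h₂.depth_le

lemma Descends.total {u x y : α} (hx : T.Descends u x) (hy : T.Descends u y) :
    T.Descends x y ∨ T.Descends y x := by
  obtain ⟨m, rfl⟩ := hx
  obtain ⟨n, rfl⟩ := hy
  rcases le_total m n with h | h
  · exact .inl ⟨n - m, by rw [← Function.iterate_add_apply, Nat.sub_add_cancel h]⟩
  · exact .inr ⟨m - n, by rw [← Function.iterate_add_apply, Nat.sub_add_cancel h]⟩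

lemma eq_of_descends_of_mem_leaves {x y : α} (hx : x ∈ T.leaves) (h : T.Descends y x) :
    y = x := by
  obtain ⟨n, hn⟩ := h
  induction n generalizing x with
  | zero => exact hn
  | succ n ih =>
    rw [Function.iterate_succ_apply'] at hn
    by_cases hroot : T.parent^[n] y = T.root
    · rw [hroot, T.parent_root] at hn
      exact ih hx (hroot.trans hn)
    · have hchild : T.parent^[n] y ∈ T.children x := ⟨hroot, hn⟩
      rw [show T.children x = ∅ from hx] at hchild
      exact hchild.elim

end Descends

def IsLCA (S : Set α) (z : α) : Prop :=
  (∀ b ∈ S, T.Descends b z) ∧ ∀ x, (∀ b ∈ S, T.Descends b x) → T.Descends z x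

section LCA

variable {T}

lemma IsLCA.unique {S : Set α} {z z' : α} (hz : T.IsLCA S z) (hz' : T.IsLCA S z') : z = z' :=
  (hz.2 z' hz'.1).antisymm (hz'.2 z hz.1)

/-- The lowest common ancestor of `S` is the first ancestor `parent^[m] a` of a fixed `a ∈ S`
lying above all of `S`; minimality of `m` yields the second vertex `b`. -/
lemma exists_isLCA_and_eq_or_pair {S : Set α} {a : α} (ha : a ∈ S) :
    ∃ z, T.IsLCA S z ∧ (z = a ∨ ∃ b ∈ S, b ≠ a ∧ T.IsLCA {a, b} z) := by
  classical
  have hex : ∃ n, ∀ b ∈ S, T.Descends b (T.parent^[n] a) :=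
    ⟨T.depth a, fun b _ => iterate_parent_depth a ▸ descends_root b⟩
  set m := Nat.find hex
  have hall : ∀ b ∈ S, T.Descends b (T.parent^[m] a) := Nat.find_spec hex
  have hmin : ∀ n, (∀ b ∈ S, T.Descends b (T.parent^[n] a)) → T.Descends (T.parent^[m] a)
      (T.parent^[n] a) := fun n hn =>
    ⟨n - m, by rw [← Function.iterate_add_apply, Nat.sub_add_cancel (Nat.find_min' hex hn)]⟩
  refine ⟨_, ⟨hall, fun x hx => ?_⟩, ?_⟩
  · obtain ⟨n, rfl⟩ := hx a ha
    exact hmin n hx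
  rcases Nat.eq_zero_or_pos m with hm | hm
  · exact .inl (by rw [hm]; rfl)
  obtain ⟨b, hb, hbm⟩ : ∃ b ∈ S, ¬ T.Descends b (T.parent^[m - 1] a) := by
    simpa using Nat.find_min hex (m := m - 1) (by omega)
  refine .inr ⟨b, hb, fun hba => hbm (hba ▸ ⟨m - 1, rfl⟩), ?_, fun x hx => ?_⟩
  · simp only [Set.mem_insert_iff, Set.mem_singleton_iff, forall_eq_or_imp, forall_eq]
    exact ⟨⟨m, rfl⟩, hall b hb⟩
  obtain ⟨n, rfl⟩ := hx a (by simp)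
  refine ⟨n - m, ?_⟩
  rw [← Function.iterate_add_apply, Nat.sub_add_cancel]
  by_contra! hnm
  exact hbm ((hx b (by simp)).trans
    ⟨m - 1 - n, by rw [← Function.iterate_add_apply, Nat.sub_add_cancel (by omega)]⟩)

lemma exists_isLCA {S : Set α} (hS : S.Nonempty) : ∃ z, T.IsLCA S z :=
  let ⟨_, ha⟩ := hS
  (exists_isLCA_and_eq_or_pair ha).imp fun _ h => h.1

variable (T) in
noncomputable def lca (u v : α) : α := (exists_isLCA (T := T) (Set.insert_nonempty u {v})).choose

lemma isLCA_lca (u v : α) : T.IsLCA {u, v} (T.lca u v) :=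
  (exists_isLCA (Set.insert_nonempty u {v})).choose_spec

variable (T) in
lemma descends_lca_left (u v : α) : T.Descends u (T.lca u v) :=
  (isLCA_lca u v).1 u (by simp)

variable (T) in
lemma descends_lca_right (u v : α) : T.Descends v (T.lca u v) :=
  (isLCA_lca u v).1 v (by simp)

lemma Descends.lca {u v x : α} (hu : T.Descends u x) (hv : T.Descends v x) :
    T.Descends (T.lca u v) x :=
  (isLCA_lca u v).2 x (by simp [hu, hv])

lemma IsLCA.eq_lca {u v z : α} (hz : T.IsLCA {u, v} z) : z = T.lca u v :=
  hz.unique (isLCA_lca u v)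

lemma lca_comm (u v : α) : T.lca u v = T.lca v u :=
  ((T.descends_lca_right v u).lca (T.descends_lca_left v u)).antisymm
    ((T.descends_lca_right u v).lca (T.descends_lca_left u v))

lemma lca_eq_right {u v : α} (h : T.Descends u v) : T.lca u v = v :=
  (h.lca (.refl v)).antisymm (T.descends_lca_right u v)

lemma IsLCA.eq_or_exists_eq_lca {S : Set α} {z a : α} (hz : T.IsLCA S z) (ha : a ∈ S) :
    z = a ∨ ∃ b ∈ S, b ≠ a ∧ z = T.lca a b := by
  obtain ⟨z', hz', h⟩ := exists_isLCA_and_eq_or_pair (T := T) ha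
  rw [hz.unique hz']
  exact h.imp_right fun ⟨b, hb, hba, hb'⟩ => ⟨b, hb, hba, hb'.eq_lca⟩

lemma descends_lca_of_not_descends {u y r : α} (hu : T.Descends u r) (hy : ¬ T.Descends y r) :
    T.Descends r (T.lca u y) :=
  (hu.total (T.descends_lca_left u y)).resolve_right
    fun h => hy ((T.descends_lca_right u y).trans h)

lemma lca_eq_lca_of_not_descends {u u' y r : α} (hu : T.Descends u r) (hu' : T.Descends u' r)
    (hy : ¬ T.Descends y r) : T.lca u y = T.lca u' y :=
  ((hu.trans (descends_lca_of_not_descends hu' hy)).lca (T.descends_lca_right u' y)).antisymm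
    ((hu'.trans (descends_lca_of_not_descends hu hy)).lca (T.descends_lca_right u y))

lemma lca_parent (u : α) {a : α} (h : ¬ T.Descends u a) :
    T.lca u (T.parent a) = T.lca u a := by
  have hne : a ≠ T.lca u a := fun ha => h (ha ▸ T.descends_lca_left u a)
  have ha : T.Descends (T.parent a) (T.lca u a) := (T.descends_lca_right u a).parent_of_ne hne
  exact ((T.descends_lca_left u a).lca ha).antisymm
    ((T.descends_lca_left _ _).lca ((descends_parent a).trans (T.descends_lca_right _ _)))

end LCA

/-- Equal to `T.dist u a - T.depth u` (see `dist_add_two_mul_depth_lca`); it changes by one along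
each edge, which bounds distances from below. -/
noncomputable def lcaPotential (u a : α) : ℤ := T.depth a - 2 * T.depth (T.lca u a)

section Distance

lemma adj_iff {a b : α} : T.graph.Adj a b ↔ a ≠ b ∧ (T.parent a = b ∨ T.parent b = a) := by
  simp [graph, SimpleGraph.fromRel_adj]

lemma adj_parent {v : α} (hv : T.parent v ≠ v) : T.graph.Adj v (T.parent v) :=
  T.adj_iff.mpr ⟨hv.symm, .inl rfl⟩

lemma exists_walk_iterate_parent (v : α) (n : ℕ) :
    ∃ p : T.graph.Walk v (T.parent^[n] v), p.length ≤ n := by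
  induction n with
  | zero => exact ⟨.nil, le_rfl⟩
  | succ n ih =>
    obtain ⟨p, hp⟩ := ih
    rw [Function.iterate_succ_apply']
    by_cases h : T.parent (T.parent^[n] v) = T.parent^[n] v
    · rw [h]
      exact ⟨p, by omega⟩
    · exact ⟨p.concat (T.adj_parent h), by rw [SimpleGraph.Walk.length_concat]; omega⟩

lemma graph_connected : T.graph.Connected := by
  have h (v : α) : T.graph.Reachable v T.root :=
    iterate_parent_depth v ▸ ⟨(T.exists_walk_iterate_parent v _).choose⟩
  have : Nonempty α := ⟨T.root⟩
  exact ⟨fun u v => (h u).trans (h v).symm⟩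

lemma dist_comm (u v : α) : T.dist u v = T.dist v u := SimpleGraph.dist_comm

lemma dist_self (v : α) : T.dist v v = 0 := SimpleGraph.dist_self

lemma dist_triangle (u v w : α) : T.dist u w ≤ T.dist u v + T.dist v w :=
  T.graph_connected.dist_triangle

lemma dist_iterate_parent_le (v : α) (n : ℕ) : T.dist v (T.parent^[n] v) ≤ n :=
  let ⟨p, hp⟩ := T.exists_walk_iterate_parent v n
  (SimpleGraph.dist_le p).trans hp

variable {T} in
lemma Descends.dist_add_depth_le {u z : α} (h : T.Descends u z) :
    T.dist u z + T.depth z ≤ T.depth u := by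
  obtain ⟨hle, hz⟩ := h.iterate_parent_depth_sub
  have := T.dist_iterate_parent_le u (T.depth u - T.depth z)
  rw [hz] at this
  omega

lemma lcaPotential_parent (u : α) {a : α} (ha : a ≠ T.root) :
    T.lcaPotential u (T.parent a) = T.lcaPotential u a + 1 ∨
      T.lcaPotential u (T.parent a) = T.lcaPotential u a - 1 := by
  have hd := depth_parent ha
  unfold lcaPotential
  by_cases h : T.Descends u a
  · rw [lca_eq_right h, lca_eq_right (h.trans (descends_parent a))]
    omega
  · rw [lca_parent u h]
    omega

lemma lcaPotential_le_of_adj (u : α) {a b : α} (h : T.graph.Adj a b) :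
    T.lcaPotential u b ≤ T.lcaPotential u a + 1 := by
  obtain ⟨hne, rfl | rfl⟩ := T.adj_iff.mp h
  · have ha : a ≠ T.root := fun ha => hne (by rw [ha, T.parent_root])
    rcases T.lcaPotential_parent u ha with h | h <;> omega
  · have hb : b ≠ T.root := fun hb => hne (by rw [hb, T.parent_root])
    rcases T.lcaPotential_parent u hb with h | h <;> omega

lemma lcaPotential_le_of_walk (u : α) {x y : α} (p : T.graph.Walk x y) :
    T.lcaPotential u y ≤ T.lcaPotential u x + p.length := by
  induction p with
  | nil => simp
  | cons h _ ih =>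
    have := T.lcaPotential_le_of_adj u h
    rw [SimpleGraph.Walk.length_cons]
    push_cast
    omega

lemma dist_add_two_mul_depth_lca (u v : α) :
    T.dist u v + 2 * T.depth (T.lca u v) = T.depth u + T.depth v := by
  obtain ⟨p, hp⟩ := T.graph_connected.exists_walk_length_eq_dist u v
  have hlower := T.lcaPotential_le_of_walk u p
  have hp' : p.length = T.dist u v := hp
  rw [hp', lcaPotential, lcaPotential, lca_eq_right (.refl u)] at hlower
  have hu := (T.descends_lca_left u v).dist_add_depth_le
  have hv := (T.descends_lca_right u v).dist_add_depth_le
  have htri := T.dist_triangle u (T.lca u v) v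
  rw [T.dist_comm (T.lca u v) v] at htri
  omega

variable {T} in
lemma Descends.dist_add_depth {u z : α} (h : T.Descends u z) :
    T.dist z u + T.depth z = T.depth u := by
  have := T.dist_add_two_mul_depth_lca z u
  rw [lca_comm, lca_eq_right h] at this
  omega

variable {T} in
lemma Descends.dist_pos {u z : α} (h : T.Descends u z) (hne : u ≠ z) :
    0 < T.dist z u := by
  have := h.dist_add_depth
  have := h.depth_lt hne
  omega

variable {T} in
lemma Descends.dist_add {u v w : α} (h₁ : T.Descends u v) (h₂ : T.Descends v w) :
    T.dist w u = T.dist w v + T.dist v u := by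
  have := h₁.dist_add_depth
  have := h₂.dist_add_depth
  have := (h₁.trans h₂).dist_add_depth
  omega

lemma dist_root (v : α) : T.dist T.root v = T.depth v := by
  simpa using (descends_root v).dist_add_depth

lemma dist_eq_dist_lca_add (u v : α) :
    T.dist u v = T.dist (T.lca u v) u + T.dist (T.lca u v) v := by
  have := T.dist_add_two_mul_depth_lca u v
  have := (T.descends_lca_left u v).dist_add_depth
  have := (T.descends_lca_right u v).dist_add_depth
  omega

lemma descends_lca_of_dist_add_dist_eq {u v w : α} (h : T.dist u w + T.dist w v = T.dist u v) :
    T.Descends w (T.lca u v) := by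
  by_contra hw
  have hM : T.lca u w = T.lca v w :=
    lca_eq_lca_of_not_descends (T.descends_lca_left u v) (T.descends_lca_right u v) hw
  have hlt : T.depth (T.lca u w) < T.depth (T.lca u v) :=
    (descends_lca_of_not_descends (T.descends_lca_left u v) hw).depth_lt
      fun he => hw (he ▸ T.descends_lca_right u w)
  have hwM := (T.descends_lca_right u w).depth_le
  have h₁ := T.dist_add_two_mul_depth_lca u w
  have h₂ := T.dist_add_two_mul_depth_lca v w
  have h₃ := T.dist_add_two_mul_depth_lca u v
  rw [T.dist_comm w v] at h
  rw [← hM] at h₂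
  omega

end Distance

section LCAOfSet

variable {T} {S : Set α} {z : α}

lemma IsLCA.mem_restrictSet (hz : T.IsLCA S z) (hS : S.Nonempty) : z ∈ restrictSet T S := by
  obtain ⟨a, ha⟩ := hS
  rcases hz.eq_or_exists_eq_lca ha with rfl | ⟨b, hb, -, rfl⟩
  · exact ⟨z, ha, z, ha, by simp [T.dist_self]⟩
  · exact ⟨a, ha, b, hb, by rw [T.dist_comm a, ← T.dist_eq_dist_lca_add]⟩

lemma IsLCA.dist_root_le (hz : T.IsLCA S z) {w : α} (hw : w ∈ restrictSet T S) :
    T.dist T.root z ≤ T.dist T.root w := by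
  obtain ⟨u, hu, v, hv, huv⟩ := hw
  rw [T.dist_root, T.dist_root]
  exact ((T.descends_lca_of_dist_add_dist_eq huv).trans ((hz.1 u hu).lca (hz.1 v hv))).depth_le

lemma IsLCA.exists_dist_add_one_le (hz : T.IsLCA S z) (hS : S ⊆ T.leaves) {a : α} (ha : a ∈ S)
    (hza : z ≠ a) : ∃ b ∈ S, b ≠ a ∧ T.dist z a + 1 ≤ T.dist a b := by
  obtain ⟨b, hb, hba, rfl⟩ := (hz.eq_or_exists_eq_lca ha).resolve_left hza
  have hb_ne : b ≠ T.lca a b := fun h =>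
    hba (eq_of_descends_of_mem_leaves (hS hb) (h ▸ T.descends_lca_left a b)).symm
  have := (T.descends_lca_right a b).dist_pos hb_ne
  have := T.dist_eq_dist_lca_add a b
  exact ⟨b, hb, hba, by omega⟩

lemma IsLCA.eq_or_dist_add_one_le_of_subset {S' : Set α} {z' : α} {k : ℕ}
    (hz : T.IsLCA S z) (hz' : T.IsLCA S' z') (hS : S.Nonempty) (hSS' : S ⊆ S')
    (hS' : S' ⊆ T.leaves)
    (hnear : ∀ b ∈ S', ¬ T.Descends b z → ∃ a ∈ S, T.dist a b ≤ k) :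
    z' = z ∨ T.dist z' z + 1 ≤ k := by
  obtain ⟨a₀, ha₀⟩ := hS
  have hzz' : T.Descends z z' := hz.2 z' fun a ha => hz'.1 a (hSS' ha)
  rcases hz'.eq_or_exists_eq_lca (hSS' ha₀) with h | ⟨b, hb, -, rfl⟩
  · exact .inl (hzz'.antisymm (h ▸ hz.1 a₀ ha₀)).symm
  by_cases hbz : T.Descends b z
  · exact .inl (((hz.1 a₀ ha₀).lca hbz).antisymm hzz')
  obtain ⟨a, ha, hab⟩ := hnear b hb hbz
  rw [lca_eq_lca_of_not_descends (hz.1 a₀ ha₀) (hz.1 a ha) hbz] at hzz' ⊢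
  have hb_ne : b ≠ T.lca a b := fun h => by
    rw [← h] at hzz'
    exact hbz (eq_of_descends_of_mem_leaves (hS' hb) hzz' ▸ .refl z)
  have := (T.descends_lca_right a b).dist_pos hb_ne
  have := (hz.1 a ha).dist_add hzz'
  have := T.dist_eq_dist_lca_add a b
  exact .inr (by omega)

end LCAOfSet

end RTree

namespace IsLeafRoot

variable {V W : Type} {k : ℕ} {G : SimpleGraph V} {T : RTree W} {f : V → W}

lemma dist_le_of_adj (h : IsLeafRoot k G T f) {u v : V} (huv : G.Adj u v) :
    T.dist (f u) (f v) ≤ k :=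
  (h.2.2 u v huv.ne).mp huv

lemma image_subset_leaves (h : IsLeafRoot k G T f) (S : Set V) : f '' S ⊆ T.leaves := by
  rintro _ ⟨v, -, rfl⟩
  exact h.2.1 ▸ ⟨v, rfl⟩

lemma dist_isLCA_clique_add_one_le (h : IsLeafRoot k G T f) (hk : 1 ≤ k) {C : Set V}
    (hC : ∀ u ∈ C, ∀ v ∈ C, u ≠ v → G.Adj u v) {z : W} (hz : T.IsLCA (f '' C) z) {u : V}
    (hu : u ∈ C) : T.dist z (f u) + 1 ≤ k := by
  by_cases hzu : z = f u
  · rw [hzu, T.dist_self]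
    omega
  obtain ⟨_, ⟨v, hv, rfl⟩, hvu, hle⟩ :=
    hz.exists_dist_add_one_le (h.image_subset_leaves C) (Set.mem_image_of_mem f hu) hzu
  have := h.dist_le_of_adj (hC u hu v hv fun huv => hvu (huv ▸ rfl))
  omega

end IsLeafRoot

theorem stmt8_general {V W : Type} (k : ℕ) (hk : 1 ≤ k) (G : SimpleGraph V)
    (T : RTree W) (f : V → W) (h : IsLeafRoot k G T f)
    (C X : Set V) (hCne : C.Nonempty)
    (hclique : ∀ u ∈ C, ∀ v ∈ C, u ≠ v → G.Adj u v)
    (hCX : C ⊆ X)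
    (hXC : X ⊆ C ∪ {v : V | v ∉ C ∧ ∃ u ∈ C, G.Adj u v}) :
    ∃ rC ∈ restrictSet T (f '' C),
      (∀ w ∈ restrictSet T (f '' C), T.dist T.root rC ≤ T.dist T.root w) ∧
      (∀ u ∈ C, T.dist rC (f u) + 1 ≤ k) ∧
      (∀ x ∈ X \ C, T.dist rC (f x) ≤ 2 * k) ∧
      ∃ rX ∈ restrictSet T (f '' X),
        (∀ w ∈ restrictSet T (f '' X), T.dist T.root rX ≤ T.dist T.root w) ∧
        ∀ x ∈ X, T.dist rX (f x) + 1 ≤ 3 * k := by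
  have hCne' : (f '' C).Nonempty := hCne.image f
  obtain ⟨rC, hrC⟩ := T.exists_isLCA hCne'
  obtain ⟨rX, hrX⟩ := T.exists_isLCA (hCne'.mono (Set.image_mono hCX))
  have hnbr : ∀ x ∈ X, x ∉ C → ∃ u ∈ C, G.Adj u x := fun x hx hxC =>
    ((hXC hx).resolve_left hxC).2
  have hC : ∀ u ∈ C, T.dist rC (f u) + 1 ≤ k := fun u hu =>
    h.dist_isLCA_clique_add_one_le hk hclique hrC hu
  have hN : ∀ x ∈ X \ C, T.dist rC (f x) ≤ 2 * k := by
    rintro x ⟨hx, hxC⟩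
    obtain ⟨u, hu, hux⟩ := hnbr x hx hxC
    have := T.dist_triangle rC (f u) (f x)
    have := hC u hu
    have := h.dist_le_of_adj hux
    omega
  have hrXrC : T.dist rX rC + 1 ≤ k := by
    refine (hrC.eq_or_dist_add_one_le_of_subset hrX hCne' (Set.image_mono hCX)
      (h.image_subset_leaves X) ?_).elim (fun he => by rw [he, T.dist_self]; omega) id
    rintro _ ⟨x, hx, rfl⟩ hxrC
    obtain ⟨u, hu, hux⟩ := hnbr x hx fun hxC => hxrC (hrC.1 _ ⟨x, hxC, rfl⟩)
    exact ⟨f u, ⟨u, hu, rfl⟩, h.dist_le_of_adj hux⟩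
  refine ⟨rC, hrC.mem_restrictSet hCne', fun w => hrC.dist_root_le, hC, hN,
    rX, hrX.mem_restrictSet (hCne'.mono (Set.image_mono hCX)), fun w => hrX.dist_root_le,
    fun x hx => ?_⟩
  have := T.dist_triangle rX rC (f x)
  by_cases hxC : x ∈ C
  · have := hC x hxC
    omega
  · have := hN x ⟨hx, hxC⟩
    omega

/-- Let `G` be a connected `k`-leaf power with `k`-leaf root `T`, `C` a nonempty clique of
`G`, and `C ⊆ X ⊆ C ∪ N_G(C)`.  Then (with `rC` the vertex of `T|C` closest to the root)
`T|C` has height at most `k` (every leaf of `T|C` is at distance at most `k - 1` from `rC`),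
every vertex of `X \ C` is at distance at most `2k` from `rC` in `T`, and the restriction
`T|X` has height at most `3k` (with `rX` its vertex closest to the root, every leaf of
`T|X` is at distance at most `3k - 1` from `rX`). -/
theorem stmt8 {V W : Type} [Finite W] (k : ℕ) (hk : 1 ≤ k) (G : SimpleGraph V)
    (T : RTree W) (f : V → W) (hG : G.Connected) (h : IsLeafRoot k G T f)
    (C X : Set V) (hCne : C.Nonempty)
    (hclique : ∀ u ∈ C, ∀ v ∈ C, u ≠ v → G.Adj u v)
    (hCX : C ⊆ X)
    (hXC : X ⊆ C ∪ {v : V | v ∉ C ∧ ∃ u ∈ C, G.Adj u v}) :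
    ∃ rC ∈ restrictSet T (f '' C),
      (∀ w ∈ restrictSet T (f '' C), T.dist T.root rC ≤ T.dist T.root w) ∧
      (∀ u ∈ C, T.dist rC (f u) + 1 ≤ k) ∧
      (∀ x ∈ X \ C, T.dist rC (f x) ≤ 2 * k) ∧
      ∃ rX ∈ restrictSet T (f '' X),
        (∀ w ∈ restrictSet T (f '' X), T.dist T.root rX ≤ T.dist T.root w) ∧
        ∀ x ∈ X, T.dist rX (f x) + 1 ≤ 3 * k :=
  stmt8_general k hk G T f h C X hCne hclique hCX hXC
end

section
/- Let G be a connected graph, T a k-leaf root of G, and v an internal node of T. Suppose W is the set of leaves descending from some fixed set of child subtrees of v, and every leaf in W is at distance greater than k from v in T. If W is non-empty and W ≠ V(G), then G is disconnected — contradiction; hence no such configuration exists. Equivalently: in a valued restriction (T', σ) of a k-leaf root of a connected graph, every internal node w with σ(w) ≠ ∞ satisfies σ(w) ≤ k. -/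
namespace RTree

variable {α : Type} (T : RTree α)

lemma adj_parent_s9 {c : α} (h : T.parent c ≠ c) : T.graph.Adj c (T.parent c) :=
  (SimpleGraph.fromRel_adj _ _ _).mpr ⟨fun he => h he.symm, Or.inl rfl⟩

lemma reach_iter (v : α) (n : ℕ) : T.graph.Reachable v (T.parent^[n] v) := by
  induction n with
  | zero => exact SimpleGraph.Reachable.refl v
  | succ n ih =>
    rw [Function.iterate_succ_apply']
    refine ih.trans ?_
    by_cases h : T.parent (T.parent^[n] v) = T.parent^[n] v
    · rw [h]
    · exact (T.adj_parent_s9 h).reachable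

lemma reach_all (u v : α) : T.graph.Reachable u v := by
  obtain ⟨n, hn⟩ := T.reaches u
  obtain ⟨m, hm⟩ := T.reaches v
  exact (hn ▸ T.reach_iter u n).trans (hm ▸ T.reach_iter v m).symm

lemma connected [Nonempty α] : T.graph.Connected :=
  ⟨T.reach_all⟩

lemma not_parent_descends {c : α} (hc : c ≠ T.root) : ¬ T.Descends (T.parent c) c := by
  rintro ⟨n, hn⟩
  have hcyc : T.parent^[n + 1] c = c := by
    rw [Function.iterate_succ_apply]; exact hn
  obtain ⟨N, hN⟩ := T.reaches c
  have hfix : ∀ j, T.parent^[N + j] c = T.root := by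
    intro j
    rw [add_comm, Function.iterate_add_apply, hN, Function.iterate_fixed T.parent_root]
  have hper : ∀ m, T.parent^[m * (n + 1)] c = c := by
    intro m
    induction m with
    | zero => simp
    | succ m ih =>
      rw [Nat.succ_mul, Function.iterate_add_apply, hcyc, ih]
  have h1 : T.parent^[N * (n + 1)] c = c := hper N
  have h2 : T.parent^[N * (n + 1)] c = T.root := by
    have he : N * (n + 1) = N + N * n := by ring
    rw [he]; exact hfix (N * n)
  exact hc (h1 ▸ h2)

lemma crossing {c a b : α} (hc : c ≠ T.root) (hadj : T.graph.Adj a b)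
    (ha : T.Descends a c) (hb : ¬ T.Descends b c) : a = c ∧ b = T.parent c := by
  rw [graph, SimpleGraph.fromRel_adj] at hadj
  obtain ⟨_, hrel | hrel⟩ := hadj
  · obtain ⟨n, hn⟩ := ha
    cases n with
    | zero =>
      simp only [Function.iterate_zero, id] at hn
      subst hn
      exact ⟨rfl, hrel.symm⟩
    | succ n =>
      exact absurd ⟨n, by rw [← hrel, ← Function.iterate_succ_apply, hn]⟩ hb
  · obtain ⟨n, hn⟩ := ha
    exact absurd ⟨n + 1, by rw [Function.iterate_succ_apply, hrel, hn]⟩ hb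

lemma cut {c a b : α} (hc : c ≠ T.root) (ha : T.Descends a c) (hb : ¬ T.Descends b c) :
    T.dist a c + T.dist c b ≤ T.dist a b := by
  classical
  obtain ⟨p, hp⟩ := (T.reach_all a b).exists_walk_length_eq_dist
  obtain ⟨d, hd, hdf, hds⟩ := p.exists_boundary_dart {x | T.Descends x c} ha hb
  have hfc : d.fst = c := (T.crossing hc d.adj hdf hds).1
  have hsup : c ∈ p.support := hfc ▸ SimpleGraph.Walk.dart_fst_mem_support_of_mem_darts p hd
  have hspec := p.take_spec hsup
  calc T.dist a c + T.dist c b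
      ≤ (p.takeUntil c hsup).length + (p.dropUntil c hsup).length :=
        Nat.add_le_add (SimpleGraph.dist_le _) (SimpleGraph.dist_le _)
    _ = p.length := by rw [← SimpleGraph.Walk.length_append, hspec]
    _ = T.dist a b := hp

lemma dist_parent {c : α} (hc : c ≠ T.root) : T.dist c (T.parent c) = 1 := by
  have hne : T.parent c ≠ c := fun he => T.not_parent_descends hc ⟨0, he⟩
  exact SimpleGraph.dist_eq_one_iff_adj.mpr (T.adj_parent_s9 hne)

end RTree

/-- Valued restrictions of `k`-leaf roots of connected graphs are `k`-bounded:
if `w` is a node of the restriction `T|(f '' X)` of a `k`-leaf root `T` of a connected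
graph `G`, and some child `c` of `w` in `T` outside the restriction has a leaf
descending from it (so that `σ(w) ≠ ∞`), then some such leaf is at distance at
most `k` from `w` (so that `σ(w) ≤ k`). -/

theorem stmt9 {V W : Type} [Finite W] (k : ℕ) (G : SimpleGraph V)
    (T : RTree W) (f : V → W) (hG : G.Connected) (h : IsLeafRoot k G T f)
    (X : Set V) (w : W) (hw : w ∈ restrictSet T (f '' X))
    (hex : ∃ c ∈ T.children w, c ∉ restrictSet T (f '' X) ∧
      ∃ l ∈ T.leaves, T.Descends l c) :
    ∃ c ∈ T.children w, c ∉ restrictSet T (f '' X) ∧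
      ∃ l ∈ T.leaves, T.Descends l c ∧ T.dist w l ≤ k := by
  classical
  by_contra hcon
  push_neg at hcon
  -- hcon : every far leaf situation
  obtain ⟨c₀, hc₀ch, hc₀r, l₀, hl₀leaf, hl₀desc⟩ := hex
  obtain ⟨x₀, hx₀⟩ : l₀ ∈ Set.range f := h.2.1 ▸ hl₀leaf
  set R := restrictSet T (f '' X) with hR
  set B : Set V := {x | ∃ c, (c ∈ T.children w ∧ c ∉ R) ∧ T.Descends (f x) c} with hB
  have hwdesc : ∀ c ∈ T.children w, ¬ T.Descends w c := by
    intro c hc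
    have := T.not_parent_descends hc.1
    rwa [hc.2] at this
  have hdistcw : ∀ c ∈ T.children w, T.dist c w = 1 := by
    intro c hc
    have := T.dist_parent hc.1
    rwa [hc.2] at this
  have hconnT : T.graph.Connected := @RTree.connected W T ⟨w⟩
  have htri : ∀ a b c : W, T.dist a c ≤ T.dist a b + T.dist b c :=
    fun _ _ _ => hconnT.dist_triangle
  -- the witness from hw
  obtain ⟨a, haX, b, hbX, hsum⟩ := hw
  obtain ⟨u, huX, rfl⟩ := haX
  obtain ⟨v, hvX, rfl⟩ := hbX
  have huB : u ∉ B := by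
    rintro ⟨c, ⟨hcch, hcr⟩, hdesc⟩
    by_cases hv : T.Descends (f v) c
    · have h1 : T.dist (f u) c + T.dist c w ≤ T.dist (f u) w :=
        T.cut hcch.1 hdesc (hwdesc c hcch)
      have h2 : T.dist (f v) c + T.dist c w ≤ T.dist (f v) w :=
        T.cut hcch.1 hv (hwdesc c hcch)
      have h3 : T.dist (f u) (f v) ≤ T.dist (f u) c + T.dist c (f v) := htri _ _ _
      rw [hdistcw c hcch] at h1 h2
      rw [show T.dist w (f v) = T.dist (f v) w from SimpleGraph.dist_comm,
        show T.dist c (f v) = T.dist (f v) c from SimpleGraph.dist_comm] at *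
      omega
    · have h1 : T.dist (f u) c + T.dist c (f v) ≤ T.dist (f u) (f v) :=
        T.cut hcch.1 hdesc hv
      have h2 : T.dist (f u) (f v) ≤ T.dist (f u) c + T.dist c (f v) := htri _ _ _
      exact hcr ⟨f u, ⟨u, huX, rfl⟩, f v, ⟨v, hvX, rfl⟩, le_antisymm h1 h2⟩
  have hx₀B : x₀ ∈ B := ⟨c₀, ⟨hc₀ch, hc₀r⟩, hx₀ ▸ hl₀desc⟩
  obtain ⟨p⟩ := hG.preconnected x₀ u
  obtain ⟨d, hd, hdf, hds⟩ := p.exists_boundary_dart B hx₀B huB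
  obtain ⟨c, ⟨hcch, hcr⟩, hdesc⟩ := hdf
  have hfbnd : ¬ T.Descends (f d.snd) c := fun hdb => hds ⟨c, ⟨hcch, hcr⟩, hdb⟩
  have hne : d.fst ≠ d.snd := d.adj.ne
  have hklt : T.dist (f d.fst) (f d.snd) ≤ k := (h.2.2 d.fst d.snd hne).mp d.adj
  have hfaleaf : f d.fst ∈ T.leaves := h.2.1 ▸ Set.mem_range_self d.fst
  have hfar : k < T.dist w (f d.fst) := hcon c hcch hcr (f d.fst) hfaleaf hdesc
  have h1 : T.dist (f d.fst) c + T.dist c (f d.snd) ≤ T.dist (f d.fst) (f d.snd) :=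
    T.cut hcch.1 hdesc hfbnd
  have h2 : 0 < T.dist c (f d.snd) :=
    (T.reach_all c (f d.snd)).pos_dist_of_ne (fun he => hfbnd (he ▸ ⟨0, rfl⟩))
  have h3 : T.dist w (f d.fst) ≤ T.dist w c + T.dist c (f d.fst) := htri _ _ _
  have h4 : T.dist w c = 1 := SimpleGraph.dist_comm.trans (hdistcw c hcch)
  have h5 : T.dist c (f d.fst) = T.dist (f d.fst) c := SimpleGraph.dist_comm
  omega
end

section
/- Let S(s,h) denote the number of possible signatures of s-bounded valued trees of height at most h with leaf layers in {0,1,...,k}. Then S(s,1) ≤ k+1 and S(s,h) ≤ (s+2)·3^{S(s,h-1)} + S(s,h-1) for h > 1. In particular, S(s,h) is finite for all s, h. -/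
/-- The space of possible signatures of `s`-bounded valued trees, with leaf layers in
`{0, …, k}`, of height at most `h + 1`.  A signature of a single leaf is its layer; a
signature of a taller tree either is a signature of smaller height, or records, for each
possible signature of smaller height, a count in `{0, 1, 2}` of root-children whose
subtree has that signature, together with the root's `σ`-value in `{0, …, s} ∪ {∞}`. -/
def SigSpace (k s : ℕ) : ℕ → Type
  | 0 => Fin (k + 1)
  | h + 1 => SigSpace k s h ⊕ ((SigSpace k s h → Fin 3) × Option (Fin (s + 1)))

lemma sigFinite (k s : ℕ) : ∀ h, Finite (SigSpace k s h) := by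
  intro h
  induction h with
  | zero => exact inferInstanceAs (Finite (Fin (k + 1)))
  | succ n ih =>
      exact inferInstanceAs (Finite (SigSpace k s n ⊕
        ((SigSpace k s n → Fin 3) × Option (Fin (s + 1)))))

/-- The number `S(s,h)` of possible signatures satisfies `S(s,1) ≤ k + 1` and
`S(s,h) ≤ (s + 2) · 3 ^ S(s,h-1) + S(s,h-1)`; in particular it is finite for all `s, h`. -/
theorem stmt10 (k s : ℕ) :
    (∀ h : ℕ, Finite (SigSpace k s h)) ∧
    Nat.card (SigSpace k s 0) ≤ k + 1 ∧
    ∀ h : ℕ, Nat.card (SigSpace k s (h + 1)) ≤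
      (s + 2) * 3 ^ Nat.card (SigSpace k s h) + Nat.card (SigSpace k s h) := by
  refine ⟨sigFinite k s, ?_, ?_⟩
  · simp [SigSpace]
  · intro h
    have : Finite (SigSpace k s h) := sigFinite k s h
    show Nat.card (SigSpace k s h ⊕ ((SigSpace k s h → Fin 3) × Option (Fin (s + 1)))) ≤ _
    rw [Nat.card_sum, Nat.card_prod, Nat.card_fun, Nat.card_eq_fintype_card (α := Option _)]
    simp [mul_comm, Nat.add_comm]
    omega
end

section
/- Suppose two valued trees T1 (with layering ℓ1) and T2 (with layering ℓ2) have equal signatures. Then for any node x of T1, there exists a node y of T2 such that dist(x, root of T1) = dist(y, root of T2) and the signatures of the subtrees rooted at x and y are equal. -/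
/-! A child `u` of the first root matches itself, so it is counted at least once among the
children matching `u`; the truncation `min 2` preserves positivity, hence the second root has
a child matching `u` as well, with one unit less of fuel. Descending along the path to `x`
consumes `d` units of fuel and leaves `n`. -/

/-- A valued tree with leaf layers in `{0, …, k}` and internal `σ`-values in
`{0, …, s} ∪ {∞}` (encoded as `Option (Fin (s+1))`, with `none` standing for `∞`). -/
inductive VTree (k s : ℕ) : Type where
  | leaf : Fin (k + 1) → VTree k s
  | node : List (VTree k s) → Option (Fin (s + 1)) → VTree k s

/-- `SigEqAux k s n t₁ t₂` means that `t₁` and `t₂` have equal signatures, compared to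
recursion depth (fuel) `n`.  Two leaves have equal signatures iff their layers agree; two
internal nodes have equal signatures iff their `σ`-values agree and, for every possible
child-subtree signature, the two roots have the same number of children with that
signature, truncated at 2. -/
def SigEqAux (k s : ℕ) : ℕ → VTree k s → VTree k s → Prop
  | 0, _, _ => True
  | _ + 1, .leaf a, .leaf b => a = b
  | n + 1, .node c1 s1, .node c2 s2 =>
      s1 = s2 ∧
      ∀ u ∈ c1 ++ c2,
        min 2 (Nat.card {i : Fin c1.length // SigEqAux k s n (c1.get i) u}) =
        min 2 (Nat.card {i : Fin c2.length // SigEqAux k s n (c2.get i) u})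
  | _ + 1, .leaf _, .node _ _ => False
  | _ + 1, .node _ _, .leaf _ => False

/-- `SubAt k s d x t` means that `x` is a subtree of `t` rooted at a node at depth `d`. -/
inductive SubAt (k s : ℕ) : ℕ → VTree k s → VTree k s → Prop where
  | refl (t : VTree k s) : SubAt k s 0 t t
  | step {d : ℕ} {x u : VTree k s} {c : List (VTree k s)} {σ : Option (Fin (s + 1))} :
      u ∈ c → SubAt k s d x u → SubAt k s (d + 1) x (.node c σ)

namespace SigEqAux

variable {k s : ℕ}

theorem refl (n : ℕ) (t : VTree k s) : SigEqAux k s n t t := by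
  cases n with
  | zero => trivial
  | succ n =>
    cases t with
    | leaf a => exact Eq.refl a
    | node c σ => exact ⟨Eq.refl σ, fun _ _ => Eq.refl _⟩

theorem symm {n : ℕ} {a b : VTree k s} (h : SigEqAux k s n a b) : SigEqAux k s n b a := by
  cases n with
  | zero => trivial
  | succ n =>
    cases a <;> cases b
    case leaf.leaf => exact Eq.symm h
    case node.node c₁ σ₁ c₂ σ₂ =>
      obtain ⟨hσ, hcount⟩ := h
      refine ⟨hσ.symm, fun u hu => (hcount u ?_).symm⟩
      rw [List.mem_append] at hu ⊢
      exact hu.symm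
    all_goals exact h

theorem exists_child_of_node {n : ℕ} {c : List (VTree k s)} {σ : Option (Fin (s + 1))}
    {t : VTree k s} (h : SigEqAux k s (n + 1) (.node c σ) t) {u : VTree k s} (hu : u ∈ c) :
    ∃ c' σ', t = .node c' σ' ∧ ∃ v ∈ c', SigEqAux k s n v u := by
  cases t with
  | leaf _ => exact h.elim
  | node c' σ' =>
    obtain ⟨-, hcount⟩ := h
    obtain ⟨i, rfl⟩ := List.mem_iff_get.mp hu
    have hpos : 0 < Nat.card {j : Fin c.length // SigEqAux k s n (c.get j) (c.get i)} :=
      Nat.card_pos_iff.mpr ⟨⟨⟨i, refl n _⟩⟩, Subtype.finite⟩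
    have hpos' : 0 < Nat.card {j : Fin c'.length // SigEqAux k s n (c'.get j) (c.get i)} := by
      have := hcount _ (List.mem_append_left _ hu)
      omega
    obtain ⟨⟨j, hj⟩⟩ := (Nat.card_pos_iff.mp hpos').1
    exact ⟨c', σ', rfl, c'.get j, List.get_mem c' j, hj⟩

end SigEqAux

/-- If two valued trees have equal signatures, then for every node `x` of the first tree
there is a node `y` of the second tree at the same distance from the root such that the
subtrees rooted at `x` and `y` have equal signatures. -/
theorem stmt14 (k s n d : ℕ) (T1 T2 x : VTree k s)
    (hsig : SigEqAux k s (n + d) T1 T2)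
    (hx : SubAt k s d x T1) :
    ∃ y : VTree k s, SubAt k s d y T2 ∧ SigEqAux k s n x y := by
  induction hx generalizing T2 with
  | refl => exact ⟨T2, SubAt.refl T2, hsig⟩
  | step hu _ ih =>
    obtain ⟨c', σ', rfl, v, hv, hvu⟩ := SigEqAux.exists_child_of_node hsig hu
    obtain ⟨y, hy, hxy⟩ := ih v hvu.symm
    exact ⟨y, SubAt.step hv hy, hxy⟩
end

section
/- Let T be a k-leaf root of a connected graph G, let v be a node of T, and let z be a leaf of T minimizing dist_T(z, v), with z not a descendant of a child v_i of v. If the subtree rooted at v_i contains at least one leaf, then it contains at least one leaf adjacent to z in G (i.e., at distance at most k from z in T). -/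
section Aux

open SimpleGraph

variable {α : Type} (T : RTree α)

lemma RTree.reachable_iterate (u : α) (n : ℕ) : T.graph.Reachable u (T.parent^[n] u) := by
  induction n with
  | zero => exact Reachable.refl u
  | succ n ih =>
    refine ih.trans ?_
    rw [Function.iterate_succ_apply']
    by_cases hp : T.parent (T.parent^[n] u) = T.parent^[n] u
    · rw [hp]
    · have hadj : T.graph.Adj (T.parent^[n] u) (T.parent (T.parent^[n] u)) := by
        rw [RTree.graph, SimpleGraph.fromRel_adj]
        exact ⟨fun e => hp e.symm, Or.inl rfl⟩
      exact hadj.reachable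

lemma RTree.graph_connected_s18 [Nonempty α] : T.graph.Connected := by
  rw [SimpleGraph.connected_iff]
  refine ⟨fun a b => ?_, ‹_›⟩
  obtain ⟨n, hn⟩ := T.reaches a
  obtain ⟨m, hm⟩ := T.reaches b
  exact ((T.reachable_iterate a n).trans (by rw [hn, ← hm])).trans (T.reachable_iterate b m).symm

lemma RTree.descends_of_adj {vi v a b : α} (hvi : vi ∈ T.children v) (hab : T.graph.Adj a b)
    (ha : T.Descends a vi) (hb : ¬ T.Descends b vi) : a = vi ∧ b = v := by
  rw [RTree.graph, SimpleGraph.fromRel_adj] at hab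
  obtain ⟨hne, hp | hp⟩ := hab
  · obtain ⟨n, hn⟩ := ha
    cases n with
    | zero =>
      simp only [Function.iterate_zero, id] at hn
      subst hn
      exact ⟨rfl, by rw [← hp, hvi.2]⟩
    | succ m =>
      exact absurd ⟨m, by rw [← hp, ← Function.iterate_succ_apply, hn]⟩ hb
  · obtain ⟨n, hn⟩ := ha
    exact absurd ⟨n + 1, by rw [Function.iterate_succ_apply, hp, hn]⟩ hb

lemma RTree.mem_support_of_walk {vi v l w : α} (hvi : vi ∈ T.children v)
    (p : T.graph.Walk l w) (hl : T.Descends l vi) (hw : ¬ T.Descends w vi) :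
    v ∈ p.support := by
  induction p with
  | nil => exact absurd hl hw
  | @cons a b c hab p ih =>
    by_cases hb : T.Descends b vi
    · exact List.mem_cons_of_mem _ (ih hb hw)
    · have := T.descends_of_adj hvi hab hl hb
      rw [SimpleGraph.Walk.support_cons]
      exact List.mem_cons_of_mem _ (this.2 ▸ p.start_mem_support)

lemma RTree.dist_split {vi v l w : α} [Nonempty α] (hvi : vi ∈ T.children v)
    (hl : T.Descends l vi) (hw : ¬ T.Descends w vi) :
    T.dist l v + T.dist v w ≤ T.dist l w := by
  classical
  obtain ⟨p, hp⟩ := (T.graph_connected_s18).exists_walk_length_eq_dist l w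
  have hv : v ∈ p.support := T.mem_support_of_walk hvi p hl hw
  have hsplit := congrArg SimpleGraph.Walk.length (p.take_spec hv)
  rw [SimpleGraph.Walk.length_append] at hsplit
  calc T.dist l v + T.dist v w
      ≤ (p.takeUntil v hv).length + (p.dropUntil v hv).length :=
        Nat.add_le_add (SimpleGraph.dist_le _) (SimpleGraph.dist_le _)
    _ = p.length := hsplit
    _ = T.dist l w := hp

end Aux

/-- Let `T` be a `k`-leaf root of a connected graph `G`, `v` a node of `T`, and `z` a
vertex of `G` whose leaf minimizes the distance to `v` among all leaves, with `f z` not a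
descendant of the child `vi` of `v`.  If the subtree rooted at `vi` contains a leaf, then
it contains a leaf adjacent to `z` in `G`, i.e. at distance at most `k` from `f z` in `T`. -/
theorem stmt18 {V W : Type} [Finite W] (k : ℕ) (G : SimpleGraph V)
    (T : RTree W) (f : V → W) (hG : G.Connected) (h : IsLeafRoot k G T f)
    (v : W) (z : V)
    (hmin : ∀ w ∈ T.leaves, T.dist (f z) v ≤ T.dist w v)
    (vi : W) (hvi : vi ∈ T.children v) (hz : ¬T.Descends (f z) vi)
    (hleaf : ∃ l ∈ T.leaves, T.Descends l vi) :
    ∃ x : V, T.Descends (f x) vi ∧ G.Adj z x ∧ T.dist (f z) (f x) ≤ k := by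
  obtain ⟨hinj, hrange, hadj⟩ := h
  have : Nonempty W := ⟨v⟩
  have hconn : T.graph.Connected := T.graph_connected_s18
  -- first find a leaf descendant within distance k
  have key : ∃ x : V, T.Descends (f x) vi ∧ T.dist (f z) (f x) ≤ k := by
    by_contra hc
    push_neg at hc
    -- S: vertices whose leaves descend vi
    -- no edges from S to complement
    have noedge : ∀ x y : V, T.Descends (f x) vi → ¬ T.Descends (f y) vi → ¬ G.Adj x y := by
      intro x y hx hy hxy
      have hne : x ≠ y := fun e => hy (e ▸ hx)
      have hd : T.dist (f x) (f y) ≤ k := (hadj x y hne).mp hxy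
      have h1 : T.dist (f x) v + T.dist v (f y) ≤ T.dist (f x) (f y) :=
        T.dist_split hvi hx hy
      have hfy : f y ∈ T.leaves := hrange ▸ Set.mem_range_self y
      have h2 : T.dist (f z) v ≤ T.dist (f y) v := hmin _ hfy
      have h3 : T.dist (f x) (f z) ≤ T.dist (f x) v + T.dist v (f z) :=
        hconn.dist_triangle
      have h4 : k < T.dist (f z) (f x) := hc x hx
      have e1 : T.dist (f z) v = T.dist v (f z) := SimpleGraph.dist_comm
      have e2 : T.dist (f z) (f x) = T.dist (f x) (f z) := SimpleGraph.dist_comm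
      have e3 : T.dist (f y) v = T.dist v (f y) := SimpleGraph.dist_comm
      omega
    -- pick a vertex y0 with f y0 descending vi
    obtain ⟨l, hlleaf, hldesc⟩ := hleaf
    have : l ∈ Set.range f := hrange ▸ hlleaf
    obtain ⟨y0, rfl⟩ := this
    -- everything reachable from y0 descends vi
    have stay : ∀ {a b : V} (p : G.Walk a b), T.Descends (f a) vi → T.Descends (f b) vi := by
      intro a b p
      induction p with
      | nil => exact id
      | @cons a b c hab p ih =>
        intro ha
        by_cases hb : T.Descends (f b) vi
        · exact ih hb
        · exact absurd hab (noedge a b ha hb)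
    exact hz (stay (hG y0 z).some hldesc)
  obtain ⟨x, hxdesc, hxd⟩ := key
  have hne : z ≠ x := fun e => hz (e ▸ hxdesc)
  exact ⟨x, hxdesc, (hadj z x hne).mpr hxd, hxd⟩
end
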